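/- arXiv:2504.20396 — 6 statements merged into one kernel-verified Lean document; each statement's English description precedes it below -/
import Mathlib

section
/- Let c, e : [0,∞) → ℝ be bounded continuous functions with c(t) > 0 and e(t) ≥ 0 for all t ≥ 0, and let p : [0,∞) → ℝ be a differentiable solution of the time-varying Levins model p'(t) = c(t)·p(t)·(1 − p(t)) − e(t)·p(t). If p(0) ∈ (0,1], then p(t) ∈ (0,1] for all t ≥ 0. -/
open Filter Set

/-- For the time-varying Levins model `p' = c t * p * (1 - p) - e t * p` with bounded
continuous rates, `c t > 0` and `e t ≥ 0`, the interval `(0, 1]` is positively invariant. -/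
theorem levins_time_varying_invariance (c e : ℝ → ℝ)
    (hc_cont : ContinuousOn c (Set.Ici 0)) (he_cont : ContinuousOn e (Set.Ici 0))
    (hc_bdd : ∃ M, ∀ t, 0 ≤ t → |c t| ≤ M) (he_bdd : ∃ M, ∀ t, 0 ≤ t → |e t| ≤ M)
    (hc_pos : ∀ t, 0 ≤ t → 0 < c t) (he_nonneg : ∀ t, 0 ≤ t → 0 ≤ e t)
    (p : ℝ → ℝ)
    (hp : ∀ t, 0 ≤ t → HasDerivAt p (c t * p t * (1 - p t) - e t * p t) t)
    (hp0 : p 0 ∈ Set.Ioc (0 : ℝ) 1) :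
    ∀ t, 0 ≤ t → p t ∈ Set.Ioc (0 : ℝ) 1 := by
  obtain ⟨hp0_pos, hp0_le⟩ := hp0
  have pcont : ∀ t : ℝ, 0 ≤ t → ContinuousAt p t := fun t ht => (hp t ht).continuousAt
  -- Part A: p t ≤ 1 for all t ≥ 0
  have hle1 : ∀ t, 0 ≤ t → p t ≤ 1 := by
    by_contra h
    push_neg at h
    obtain ⟨t₁, ht₁0, ht₁⟩ := h
    set S : Set ℝ := Icc 0 t₁ ∩ p ⁻¹' (Iic 1) with hS
    have hpc : ContinuousOn p (Icc 0 t₁) := fun t ht =>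
      (pcont t ht.1).continuousWithinAt
    have hScl : IsClosed S := hpc.preimage_isClosed_of_isClosed isClosed_Icc isClosed_Iic
    have hSne : S.Nonempty := ⟨0, ⟨le_refl 0, ht₁0⟩, hp0_le⟩
    have hSbdd : BddAbove S := ⟨t₁, fun x hx => hx.1.2⟩
    set s := sSup S with hsdef
    have hsS : s ∈ S := hScl.csSup_mem hSne hSbdd
    have hs0 : 0 ≤ s := hsS.1.1
    have hst₁ : s ≤ t₁ := hsS.1.2
    have hps : p s ≤ 1 := hsS.2
    have hs_lt : s < t₁ := lt_of_le_of_ne hst₁ (by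
      intro hcontra; rw [hcontra] at hps; linarith)
    have hgt : ∀ t, s < t → t ≤ t₁ → 1 < p t := by
      intro t hst htt₁
      by_contra hle
      push_neg at hle
      have : t ∈ S := ⟨⟨le_trans hs0 hst.le, htt₁⟩, hle⟩
      exact absurd (le_csSup hSbdd this) (not_le.mpr hst)
    -- p is antitone on [s, t₁]
    have hanti : AntitoneOn p (Icc s t₁) := by
      apply antitoneOn_of_deriv_nonpos (convex_Icc s t₁)
      · exact fun t ht => (pcont t (le_trans hs0 ht.1)).continuousWithinAt
      · intro t ht
        rw [interior_Icc] at ht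
        exact ((hp t (le_trans hs0 ht.1.le)).differentiableAt).differentiableWithinAt
      · intro t ht
        rw [interior_Icc] at ht
        have ht0 : 0 ≤ t := le_trans hs0 ht.1.le
        rw [(hp t ht0).deriv]
        have h1 : 1 < p t := hgt t ht.1 ht.2.le
        have hc := hc_pos t ht0
        have he := he_nonneg t ht0
        have h2 : c t * p t * (1 - p t) ≤ 0 :=
          mul_nonpos_of_nonneg_of_nonpos (by nlinarith) (by linarith)
        have h3 : 0 ≤ e t * p t := mul_nonneg he (by linarith)
        linarith
    have := hanti (left_mem_Icc.mpr hst₁) (right_mem_Icc.mpr hst₁) hst₁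
    linarith
  -- Part B: 0 < p t for all t ≥ 0
  intro t₁ ht₁0
  refine ⟨?_, hle1 t₁ ht₁0⟩
  by_contra hle
  push_neg at hle
  obtain ⟨M, hM⟩ := he_bdd
  set S : Set ℝ := Icc 0 t₁ ∩ p ⁻¹' (Iic 0) with hS
  have hpc : ContinuousOn p (Icc 0 t₁) := fun t ht =>
    (pcont t ht.1).continuousWithinAt
  have hScl : IsClosed S := hpc.preimage_isClosed_of_isClosed isClosed_Icc isClosed_Iic
  have hSne : S.Nonempty := ⟨t₁, ⟨ht₁0, le_refl t₁⟩, hle⟩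
  have hSbdd : BddBelow S := ⟨0, fun x hx => hx.1.1⟩
  set s := sInf S with hsdef
  have hsS : s ∈ S := hScl.csInf_mem hSne hSbdd
  have hs0 : 0 ≤ s := hsS.1.1
  have hst₁ : s ≤ t₁ := hsS.1.2
  have hps : p s ≤ 0 := hsS.2
  have hpos : ∀ t, 0 ≤ t → t < s → 0 < p t := by
    intro t ht0 hts
    by_contra h
    push_neg at h
    have : t ∈ S := ⟨⟨ht0, hts.le.trans hst₁⟩, h⟩
    exact absurd (csInf_le hSbdd this) (not_le.mpr hts)
  have hs_pos : 0 < s := lt_of_le_of_ne hs0 (by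
    intro hcontra; rw [← hcontra] at hps; linarith)
  -- p ≥ 0 on [0, s]
  have hpsnonneg : 0 ≤ p s := by
    have htd : Filter.Tendsto p (nhdsWithin s (Iio s)) (nhds (p s)) :=
      ((pcont s hs0).continuousWithinAt).tendsto
    refine ge_of_tendsto htd ?_
    filter_upwards [Ioo_mem_nhdsLT_of_mem (⟨hs_pos, le_refl s⟩ : s ∈ Ioc 0 s)] with x hx
    exact (hpos x hx.1.le hx.2).le
  have hpnonneg : ∀ t, t ∈ Icc (0:ℝ) s → 0 ≤ p t := by
    intro t ⟨ht0, hts⟩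
    rcases lt_or_eq_of_le hts with h | h
    · exact (hpos t ht0 h).le
    · rw [h]; exact hpsnonneg
  -- g t = p t * exp (M * t) is monotone on [0, s]
  set g : ℝ → ℝ := fun t => p t * Real.exp (M * t) with hg
  have hgderiv : ∀ t, 0 ≤ t → HasDerivAt g
      ((c t * p t * (1 - p t) - e t * p t) * Real.exp (M * t)
        + p t * (M * Real.exp (M * t))) t := by
    intro t ht
    have hexp : HasDerivAt (fun t => Real.exp (M * t)) (M * Real.exp (M * t)) t := by
      have := (HasDerivAt.exp ((hasDerivAt_id t).const_mul M))
      simpa [mul_comm] using this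
    exact (hp t ht).mul hexp
  have hmono : MonotoneOn g (Icc 0 s) := by
    apply monotoneOn_of_deriv_nonneg (convex_Icc 0 s)
    · intro t ht
      exact ((hgderiv t ht.1).continuousAt).continuousWithinAt
    · intro t ht
      rw [interior_Icc] at ht
      exact ((hgderiv t ht.1.le).differentiableAt).differentiableWithinAt
    · intro t ht
      rw [interior_Icc] at ht
      have ht0 : 0 ≤ t := ht.1.le
      rw [(hgderiv t ht0).deriv]
      have hpt0 : 0 ≤ p t := hpnonneg t ⟨ht0, ht.2.le⟩
      have hpt1 : p t ≤ 1 := hle1 t ht0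
      have hc := hc_pos t ht0
      have he := he_nonneg t ht0
      have heM : e t ≤ M := le_trans (le_abs_self _) (hM t ht0)
      have hexp_pos : 0 < Real.exp (M * t) := Real.exp_pos _
      have key : 0 ≤ (c t * p t * (1 - p t) - e t * p t) + p t * M := by
        have k1 : 0 ≤ c t * p t * (1 - p t) :=
          mul_nonneg (mul_nonneg hc.le hpt0) (by linarith)
        have k2 : 0 ≤ p t * M - e t * p t := by nlinarith
        linarith
      nlinarith [mul_nonneg key hexp_pos.le]
  have h1 := hmono ⟨le_refl 0, hs0⟩ ⟨hs0, le_refl s⟩ hs0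
  have hg0 : 0 < g 0 := by
    simp only [hg]
    simpa using mul_pos hp0_pos (Real.exp_pos (M * 0))
  have hgs : g s ≤ 0 := by
    simp only [hg]
    exact mul_nonpos_of_nonpos_of_nonneg hps (Real.exp_pos _).le
  linarith
end

section
/- Let c, e : [0,∞) → ℝ be bounded continuous functions with c(t) > 0 and e(t) ≥ 0 for all t ≥ 0, set D(t) = e(t) − c(t) and Φ(t,s) = exp(∫_s^t D(τ) dτ). If p : [0,∞) → ℝ is a differentiable solution of the time-varying Levins model p'(t) = c(t)·p(t)·(1 − p(t)) − e(t)·p(t) with p(0) ∈ (0,1], then for every t ≥ 0 the fraction of occupied patches is given explicitly by p(t) = 1 / ( Φ(t,0)·p(0)⁻¹ + ∫_0^t Φ(t,s)·c(s) ds ). -/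
open Filter Set

/-- Transition operator of the scalar linear equation `x' = D t * x`. -/
noncomputable def Phi (D : ℝ → ℝ) (t s : ℝ) : ℝ :=
  Real.exp (∫ τ in s..t, D τ)

/-- Average of `D` over the interval from `q.1` to `q.2`. -/
noncomputable def bohlAvg (D : ℝ → ℝ) (q : ℝ × ℝ) : ℝ :=
  (q.2 - q.1)⁻¹ * ∫ τ in q.1..q.2, D τ

/-- The filter describing `t - s → +∞` with `t > s ≥ 0` for pairs `q = (s, t)`. -/
def bohlFilter : Filter (ℝ × ℝ) :=
  (Filter.atTop.comap fun q : ℝ × ℝ => q.2 - q.1) ⊓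
    Filter.principal {q : ℝ × ℝ | 0 ≤ q.1 ∧ q.1 < q.2}

/-- Upper Bohl exponent of `D`. -/
noncomputable def bohlUpper (D : ℝ → ℝ) : ℝ :=
  Filter.limsup (bohlAvg D) bohlFilter

/-- Lower Bohl exponent of `D`. -/
noncomputable def bohlLower (D : ℝ → ℝ) : ℝ :=
  Filter.liminf (bohlAvg D) bohlFilter

/-- Explicit formula for the solutions of the time-varying Levins model:
`p t = 1 / (Φ(t,0) * p(0)⁻¹ + ∫_0^t Φ(t,s) c(s) ds)` where `Φ` is the transition
operator of `v' = (e t - c t) v`. -/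
theorem levins_time_varying_explicit_formula (c e : ℝ → ℝ)
    (hc_cont : ContinuousOn c (Set.Ici 0)) (he_cont : ContinuousOn e (Set.Ici 0))
    (hc_bdd : ∃ M, ∀ t, 0 ≤ t → |c t| ≤ M) (he_bdd : ∃ M, ∀ t, 0 ≤ t → |e t| ≤ M)
    (hc_pos : ∀ t, 0 ≤ t → 0 < c t) (he_nonneg : ∀ t, 0 ≤ t → 0 ≤ e t)
    (D : ℝ → ℝ) (hD : ∀ t, D t = e t - c t)
    (p : ℝ → ℝ)
    (hp : ∀ t, 0 ≤ t → HasDerivAt p (c t * p t * (1 - p t) - e t * p t) t)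
    (hp0 : p 0 ∈ Set.Ioc (0 : ℝ) 1) :
    ∀ t, 0 ≤ t →
      p t = 1 / (Phi D t 0 * (p 0)⁻¹ + ∫ s in (0 : ℝ)..t, Phi D t s * c s) := by
  intro t ht
  set cc : ℝ → ℝ := fun s => c (max s 0) with hccdef
  set ee : ℝ → ℝ := fun s => e (max s 0) with heedef
  set pp : ℝ → ℝ := fun s => p (max s 0) with hppdef
  have hmaxc : Continuous fun x : ℝ => max x 0 := continuous_id.max continuous_const
  have hmaxm : ∀ x : ℝ, max x 0 ∈ Set.Ici (0:ℝ) := fun x => le_max_right x 0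
  have hcc_cont : Continuous cc := hc_cont.comp_continuous hmaxc hmaxm
  have hee_cont : Continuous ee := he_cont.comp_continuous hmaxc hmaxm
  have hp_cont : ContinuousOn p (Set.Ici 0) := fun x hx =>
    (hp x hx).continuousAt.continuousWithinAt
  have hpp_cont : Continuous pp := hp_cont.comp_continuous hmaxc hmaxm
  -- positivity of p on [0, ∞)
  set gg : ℝ → ℝ := fun s => cc s * (1 - pp s) - ee s with hggdef
  have hgg_cont : Continuous gg := (hcc_cont.mul (continuous_const.sub hpp_cont)).sub hee_cont
  set G : ℝ → ℝ := fun x => ∫ s in (0:ℝ)..x, gg s with hGdef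
  have hG : ∀ x : ℝ, HasDerivAt G (gg x) x := fun x =>
    intervalIntegral.integral_hasDerivAt_right (hgg_cont.intervalIntegrable 0 x)
      (hgg_cont.stronglyMeasurableAtFilter _ _) hgg_cont.continuousAt
  have hG_cont : Continuous G := continuous_iff_continuousAt.2 fun x => (hG x).continuousAt
  have hpos : ∀ b : ℝ, 0 ≤ b → 0 < p b := by
    intro b hb
    have hconst := constant_of_has_deriv_right_zero
      (f := fun x => p x * Real.exp (-(G x))) (a := 0) (b := b)
      (by
        apply ContinuousOn.mul
        · exact hp_cont.mono (fun x hx => hx.1)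
        · exact (Real.continuous_exp.comp hG_cont.neg).continuousOn)
      (by
        intro x hx
        have hx0 : (0:ℝ) ≤ x := hx.1
        have h1 := hp x hx0
        have h2 : HasDerivAt (fun y => Real.exp (-(G y))) (Real.exp (-(G x)) * (-(gg x))) x :=
          ((hG x).neg).exp
        have h3 := h1.mul h2
        have hgx : gg x = c x * (1 - p x) - e x := by
          simp only [hggdef, hccdef, heedef, hppdef, max_eq_left hx0]
        have : (c x * p x * (1 - p x) - e x * p x) * Real.exp (-(G x)) +
            p x * (Real.exp (-(G x)) * (-(gg x))) = 0 := by
          rw [hgx]; ring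
        rw [this] at h3
        exact h3.hasDerivWithinAt)
    have := hconst b ⟨hb, le_rfl⟩
    simp only [hGdef, intervalIntegral.integral_same, neg_zero, Real.exp_zero, mul_one] at this
    have hexp : (0:ℝ) < Real.exp (-(∫ s in (0:ℝ)..b, gg s)) := Real.exp_pos _
    nlinarith [hp0.1, Real.exp_pos (-(∫ s in (0:ℝ)..b, gg s))]
  -- the linear equation for u = p⁻¹
  set DD : ℝ → ℝ := fun s => ee s - cc s with hDDdef
  have hDD_cont : Continuous DD := hee_cont.sub hcc_cont
  set A : ℝ → ℝ := fun x => ∫ s in (0:ℝ)..x, DD s with hAdef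
  have hA : ∀ x : ℝ, HasDerivAt A (DD x) x := fun x =>
    intervalIntegral.integral_hasDerivAt_right (hDD_cont.intervalIntegrable 0 x)
      (hDD_cont.stronglyMeasurableAtFilter _ _) hDD_cont.continuousAt
  have hA_cont : Continuous A := continuous_iff_continuousAt.2 fun x => (hA x).continuousAt
  set ii : ℝ → ℝ := fun s => Real.exp (-(A s)) * cc s with hiidef
  have hii_cont : Continuous ii := (Real.continuous_exp.comp hA_cont.neg).mul hcc_cont
  have hIint : ∀ x : ℝ, HasDerivAt (fun y => ∫ s in (0:ℝ)..y, ii s) (ii x) x := fun x =>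
    intervalIntegral.integral_hasDerivAt_right (hii_cont.intervalIntegrable 0 x)
      (hii_cont.stronglyMeasurableAtFilter _ _) hii_cont.continuousAt
  set w : ℝ → ℝ := fun x => (p x)⁻¹ * Real.exp (-(A x)) - ∫ s in (0:ℝ)..x, ii s with hwdef
  have hwconst := constant_of_has_deriv_right_zero (f := w) (a := 0) (b := t)
    (by
      apply ContinuousOn.sub
      · exact ((hp_cont.mono (fun x hx => hx.1)).inv₀ (fun x hx => (hpos x hx.1).ne')).mul
          (Real.continuous_exp.comp hA_cont.neg).continuousOn
      · exact (continuous_iff_continuousAt.2 fun x => (hIint x).continuousAt).continuousOn)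
    (by
      intro x hx
      have hx0 : (0:ℝ) ≤ x := hx.1
      have hpne : p x ≠ 0 := (hpos x hx0).ne'
      have hu : HasDerivAt (fun y => (p y)⁻¹)
          (-(c x * p x * (1 - p x) - e x * p x) / (p x)^2) x := (hp x hx0).inv hpne
      have hE : HasDerivAt (fun y => Real.exp (-(A y))) (Real.exp (-(A x)) * (-(DD x))) x :=
        ((hA x).neg).exp
      have h3 := (hu.mul hE).sub (hIint x)
      have hDDx : DD x = e x - c x := by
        simp only [hDDdef, heedef, hccdef, max_eq_left hx0]
      have hiix : ii x = Real.exp (-(A x)) * c x := by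
        simp only [hiidef, hccdef, max_eq_left hx0]
      have heq : -(c x * p x * (1 - p x) - e x * p x) / (p x)^2 * Real.exp (-(A x)) +
          (p x)⁻¹ * (Real.exp (-(A x)) * (-(DD x))) - ii x = 0 := by
        rw [hDDx, hiix]; field_simp; ring
      rw [heq] at h3
      exact h3.hasDerivWithinAt)
  have hws := hwconst t ⟨ht, le_rfl⟩
  have hw0 : w 0 = (p 0)⁻¹ := by
    simp [hwdef, hAdef, intervalIntegral.integral_same]
  rw [hw0] at hws
  -- rewrite the target denominator
  have hAt : ∀ s, 0 ≤ s → s ≤ t → (∫ τ in s..t, D τ) = A t - A s := by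
    intro s hs hst
    have hcongr : (∫ τ in s..t, D τ) = ∫ τ in s..t, DD τ := by
      apply intervalIntegral.integral_congr
      intro τ hτ
      rw [Set.uIcc_of_le hst] at hτ
      have hτ0 : (0:ℝ) ≤ τ := le_trans hs hτ.1
      simp only [hD τ, hDDdef, heedef, hccdef, max_eq_left hτ0]
    rw [hcongr]
    have hadd := intervalIntegral.integral_add_adjacent_intervals
      (hDD_cont.intervalIntegrable 0 s) (hDD_cont.intervalIntegrable s t) (μ := MeasureTheory.volume)
    simp only [hAdef]
    linarith [hadd]
  have hPhi0 : Phi D t 0 = Real.exp (A t) := by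
    rw [Phi, hAt 0 le_rfl ht]
    simp [hAdef, intervalIntegral.integral_same]
  have hInt : (∫ s in (0:ℝ)..t, Phi D t s * c s) = Real.exp (A t) * ∫ s in (0:ℝ)..t, ii s := by
    rw [← intervalIntegral.integral_const_mul]
    apply intervalIntegral.integral_congr
    intro s hs
    rw [Set.uIcc_of_le ht] at hs
    have hiis : ii s = Real.exp (-(A s)) * c s := by
      simp only [hiidef, hccdef, max_eq_left hs.1]
    simp only [Phi]
    rw [hAt s hs.1 hs.2, hiis, ← mul_assoc, ← Real.exp_add]
    ring_nf
  rw [hPhi0, hInt]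
  have hwt : (p t)⁻¹ * Real.exp (-(A t)) - (∫ s in (0:ℝ)..t, ii s) = (p 0)⁻¹ := hws
  have hexp : Real.exp (A t) ≠ 0 := (Real.exp_pos _).ne'
  have hsub : (∫ s in (0:ℝ)..t, ii s) = (p t)⁻¹ * Real.exp (-(A t)) - (p 0)⁻¹ := by
    linarith [hwt]
  have key : Real.exp (A t) * Real.exp (-(A t)) = 1 := by
    rw [← Real.exp_add]; simp
  have hfin : Real.exp (A t) * (p 0)⁻¹ + Real.exp (A t) * ∫ s in (0:ℝ)..t, ii s = (p t)⁻¹ := by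
    rw [hsub]
    linear_combination (p t)⁻¹ * key
  rw [hfin, one_div, inv_inv]
end

section
/- Let c, e : [0,∞) → ℝ be bounded continuous functions with c(t) > 0 and e(t) ≥ 0 for all t ≥ 0, set D(t) = e(t) − c(t) and Φ(t,s) = exp(∫_s^t D(τ) dτ), and let p : [0,∞) → ℝ be a differentiable solution of the time-varying Levins model p'(t) = c(t)·p(t)·(1 − p(t)) − e(t)·p(t) with p(0) ∈ (0,1]. If the upper Bohl exponent satisfies β⁺(D) < 0, then there exist constants K ≥ 1 and α > 0 such that | 1/p(t) − ∫_0^t Φ(t,s)·c(s) ds | ≤ (K/p(0))·exp(−α·t) for all t ≥ 0; that is, 1/p(t) equals ∫_0^t Φ(t,s)·c(s) ds up to an error converging exponentially to zero. -/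
/-!
The substitution `u = 1 / p` turns the Levins equation into the linear equation
`u' = D u + c`, so variation of constants gives the exact identity
`1 / p t - ∫_0^t Φ(t,s) c(s) ds = Φ(t,0) / p 0`; positivity of `p` comes the same way from
`p' = (c (1 - p) - e) p`. A negative upper Bohl exponent gives `∫_s^t D ≤ -α (t - s)` once
`t - s ≥ T`, and boundedness of `D` controls `∫_s^t D` on shorter intervals, so
`Φ(t,s) ≤ K e^{-α (t - s)}`.
-/

open Filter Set

open MeasureTheory

section Ici

variable {E : Type*} [NormedAddCommGroup E] [NormedSpace ℝ E]

theorem hasDerivWithinAt_integral_Ici [CompleteSpace E] {f : ℝ → E} {a t : ℝ}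
    (hf : ContinuousOn f (Ici a)) (ht : a ≤ t) :
    HasDerivWithinAt (fun u => ∫ x in a..u, f x) (f t) (Ici a) t := by
  set g : ℝ → E := fun x => f (max x a)
  have hg : Continuous g :=
    hf.comp_continuous (continuous_id.max continuous_const) fun x => le_max_right x a
  have hfg : ∀ x, a ≤ x → g x = f x := fun x hx => by simp only [g, max_eq_left hx]
  refine ((hg.integral_hasStrictDerivAt a t).hasDerivAt.hasDerivWithinAt.congr
    (fun u hu => intervalIntegral.integral_congr fun x hx => ?_) ?_).congr_deriv (hfg t ht)
  · rw [uIcc_of_le hu] at hx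
    exact (hfg x hx.1).symm
  · exact intervalIntegral.integral_congr fun x hx => by
      rw [uIcc_of_le ht] at hx
      exact (hfg x hx.1).symm

theorem eq_of_hasDerivWithinAt_Ici_zero {f : ℝ → E} {a t : ℝ}
    (hf : ∀ x, a ≤ x → HasDerivWithinAt f 0 (Ici a) x) (ht : a ≤ t) : f t = f a :=
  constant_of_has_deriv_right_zero
    (fun x hx => ((hf x hx.1).continuousWithinAt).mono Icc_subset_Ici_self)
    (fun x hx => (hf x hx.1).mono (Ici_subset_Ici.2 hx.1)) t ⟨ht, le_rfl⟩

end Ici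

section Phi

variable {a : ℝ → ℝ}

@[simp]
theorem Phi_self (t : ℝ) : Phi a t t = 1 := by
  simp [Phi]

theorem Phi_pos (t s : ℝ) : 0 < Phi a t s :=
  Real.exp_pos _

theorem Phi_mul_Phi {s r t : ℝ} (hsr : IntervalIntegrable a volume s r)
    (hrt : IntervalIntegrable a volume r t) : Phi a t r * Phi a r s = Phi a t s := by
  rw [Phi, Phi, Phi, ← Real.exp_add, add_comm,
    intervalIntegral.integral_add_adjacent_intervals hsr hrt]

theorem hasDerivWithinAt_Phi_right {t₀ x : ℝ} (ha : ContinuousOn a (Ici t₀)) (hx : t₀ ≤ x) :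
    HasDerivWithinAt (Phi a t₀) (-a x * Phi a t₀ x) (Ici t₀) x := by
  have hPhi : Phi a t₀ = fun s => Real.exp (-∫ τ in t₀..s, a τ) :=
    funext fun s => by rw [Phi, intervalIntegral.integral_symm]
  rw [hPhi]
  exact (hasDerivWithinAt_integral_Ici ha hx).neg.exp.congr_deriv (mul_comm _ _)

theorem eq_Phi_mul_add_integral_of_hasDerivWithinAt {b u : ℝ → ℝ} {t₀ t : ℝ}
    (ha : ContinuousOn a (Ici t₀)) (hb : ContinuousOn b (Ici t₀))
    (hu : ∀ x, t₀ ≤ x → HasDerivWithinAt u (a x * u x + b x) (Ici t₀) x) (ht : t₀ ≤ t) :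
    u t = Phi a t t₀ * u t₀ + ∫ s in t₀..t, Phi a t s * b s := by
  have hPhi : ContinuousOn (Phi a t₀) (Ici t₀) := fun x hx =>
    (hasDerivWithinAt_Phi_right ha hx).continuousWithinAt
  have hconst := eq_of_hasDerivWithinAt_Ici_zero (f := fun x =>
      Phi a t₀ x * u x - ∫ s in t₀..x, Phi a t₀ s * b s) (fun x hx =>
    (((hasDerivWithinAt_Phi_right ha hx).mul (hu x hx)).sub
      (hasDerivWithinAt_integral_Ici (hPhi.mul hb) hx)).congr_deriv
      (by simp only [Pi.mul_apply]; ring)) ht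
  have ha_int : ∀ x y, t₀ ≤ x → t₀ ≤ y → IntervalIntegrable a volume x y := fun x y hx hy =>
    (ha.mono fun z hz => le_trans (le_min hx hy) hz.1).intervalIntegrable
  have hshift : ∫ s in t₀..t, Phi a t s * b s =
      Phi a t t₀ * ∫ s in t₀..t, Phi a t₀ s * b s := by
    rw [← intervalIntegral.integral_const_mul]
    refine intervalIntegral.integral_congr fun s hs => ?_
    rw [uIcc_of_le ht] at hs
    rw [← mul_assoc, Phi_mul_Phi (ha_int s t₀ hs.1 le_rfl) (ha_int t₀ t le_rfl ht)]
  have hinv : Phi a t t₀ * Phi a t₀ t = 1 := by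
    rw [Phi_mul_Phi (ha_int t t₀ ht le_rfl) (ha_int t₀ t le_rfl ht), Phi_self]
  simp only [Phi_self, intervalIntegral.integral_same, sub_zero, one_mul] at hconst
  rw [hshift, ← hconst]
  linear_combination -(u t) * hinv

end Phi

section Bohl

variable {D : ℝ → ℝ} {M : ℝ}

theorem integral_le_of_abs_le (hM : ∀ t, 0 ≤ t → |D t| ≤ M) {s t : ℝ} (hs : 0 ≤ s)
    (hst : s ≤ t) : ∫ τ in s..t, D τ ≤ M * (t - s) := by
  have h := intervalIntegral.norm_integral_le_of_norm_le_const (f := D) (C := M) fun x hx =>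
    hM x (hs.trans (uIoc_of_le hst ▸ hx).1.le)
  rw [abs_of_nonneg (sub_nonneg.2 hst)] at h
  exact (le_abs_self _).trans h

theorem bohlAvg_le (hM : ∀ t, 0 ≤ t → |D t| ≤ M) {q : ℝ × ℝ} (hq : 0 ≤ q.1 ∧ q.1 < q.2) :
    bohlAvg D q ≤ M := by
  have hlen : 0 < q.2 - q.1 := sub_pos.2 hq.2
  rw [bohlAvg, inv_mul_le_iff₀ hlen, mul_comm]
  exact integral_le_of_abs_le hM hq.1 hq.2.le

theorem exists_integral_le_of_bohlUpper_lt (hM : ∀ t, 0 ≤ t → |D t| ≤ M) {β : ℝ}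
    (hβ : bohlUpper D < β) :
    ∃ T, 0 < T ∧ ∀ s t, 0 ≤ s → T ≤ t - s → ∫ τ in s..t, D τ ≤ β * (t - s) := by
  have hbdd : IsBoundedUnder (· ≤ ·) bohlFilter (bohlAvg D) :=
    ⟨M, eventually_map.2 <| eventually_inf_principal.2 <| .of_forall fun _ => bohlAvg_le hM⟩
  have hev := eventually_lt_of_limsup_lt hβ hbdd
  simp only [bohlFilter, eventually_inf_principal, eventually_comap, eventually_atTop] at hev
  obtain ⟨T, hT⟩ := hev
  refine ⟨max T 1, by positivity, fun s t hs hst => ?_⟩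
  have hlen : 0 < t - s := lt_of_lt_of_le (by positivity) hst
  have h := hT (t - s) ((le_max_left T 1).trans hst) (s, t) rfl ⟨hs, sub_pos.1 hlen⟩
  rw [bohlAvg, inv_mul_lt_iff₀ hlen, mul_comm] at h
  exact h.le

theorem exists_Phi_le_of_bohlUpper_neg (hM : ∀ t, 0 ≤ t → |D t| ≤ M) (hB : bohlUpper D < 0) :
    ∃ K α, 1 ≤ K ∧ 0 < α ∧
      ∀ s t, 0 ≤ s → s ≤ t → Phi D t s ≤ K * Real.exp (-α * (t - s)) := by
  obtain ⟨α, hα, hαB⟩ : ∃ α, 0 < α ∧ bohlUpper D < -α :=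
    ⟨-bohlUpper D / 2, by linarith, by linarith⟩
  obtain ⟨T, hT, hlong⟩ := exists_integral_le_of_bohlUpper_lt hM hαB
  have hM0 : 0 ≤ M := (abs_nonneg _).trans (hM 0 le_rfl)
  refine ⟨Real.exp ((M + α) * T), α, Real.one_le_exp (by positivity), hα,
    fun s t hs hst => ?_⟩
  rw [Phi, ← Real.exp_add, Real.exp_le_exp]
  rcases le_or_gt T (t - s) with hTle | hTgt
  · nlinarith [hlong s t hs hTle]
  · nlinarith [integral_le_of_abs_le hM hs hst]

end Bohl

section Levins

variable {c e p : ℝ → ℝ}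

theorem levins_pos (hc : ContinuousOn c (Ici 0)) (he : ContinuousOn e (Ici 0))
    (hp : ∀ t, 0 ≤ t → HasDerivAt p (c t * p t * (1 - p t) - e t * p t) t) (hp0 : 0 < p 0)
    {t : ℝ} (ht : 0 ≤ t) : 0 < p t := by
  have hp_cont : ContinuousOn p (Ici 0) := fun x hx => (hp x hx).continuousAt.continuousWithinAt
  have h := eq_Phi_mul_add_integral_of_hasDerivWithinAt
    (a := fun x => c x * (1 - p x) - e x) (b := 0)
    ((hc.mul (continuousOn_const.sub hp_cont)).sub he) continuousOn_const
    (fun x hx => (hp x hx).hasDerivWithinAt.congr_deriv (by simp only [Pi.zero_apply]; ring)) ht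
  simp only [Pi.zero_apply, mul_zero, intervalIntegral.integral_zero, add_zero] at h
  rw [h]
  exact mul_pos (Phi_pos _ _) hp0

theorem levins_inv_eq (hc : ContinuousOn c (Ici 0)) (he : ContinuousOn e (Ici 0))
    (hp : ∀ t, 0 ≤ t → HasDerivAt p (c t * p t * (1 - p t) - e t * p t) t) (hp0 : 0 < p 0)
    {t : ℝ} (ht : 0 ≤ t) :
    (p t)⁻¹ = Phi (fun t => e t - c t) t 0 * (p 0)⁻¹ +
      ∫ s in (0 : ℝ)..t, Phi (fun t => e t - c t) t s * c s := by
  refine eq_Phi_mul_add_integral_of_hasDerivWithinAt (u := fun s => (p s)⁻¹) (he.sub hc) hc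
    (fun x hx => ?_) ht
  have hpx := (levins_pos hc he hp hp0 hx).ne'
  refine ((hp x hx).inv hpx).hasDerivWithinAt.congr_deriv ?_
  field_simp
  ring

end Levins

theorem levins_persistence_asymptotic_formula_general (c e : ℝ → ℝ)
    (hc_cont : ContinuousOn c (Set.Ici 0)) (he_cont : ContinuousOn e (Set.Ici 0))
    (hc_bdd : ∃ M, ∀ t, 0 ≤ t → |c t| ≤ M) (he_bdd : ∃ M, ∀ t, 0 ≤ t → |e t| ≤ M)
    (D : ℝ → ℝ) (hD : ∀ t, D t = e t - c t)
    (p : ℝ → ℝ)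
    (hp : ∀ t, 0 ≤ t → HasDerivAt p (c t * p t * (1 - p t) - e t * p t) t)
    (hp0 : p 0 ∈ Set.Ioc (0 : ℝ) 1)
    (hB : bohlUpper D < 0) :
    ∃ K α : ℝ, 1 ≤ K ∧ 0 < α ∧
      ∀ t, 0 ≤ t →
        |1 / p t - ∫ s in (0 : ℝ)..t, Phi D t s * c s| ≤ (K / p 0) * Real.exp (-α * t) := by
  obtain rfl : D = fun t => e t - c t := funext hD
  obtain ⟨Mc, hMc⟩ := hc_bdd
  obtain ⟨Me, hMe⟩ := he_bdd
  have hD_bdd : ∀ t, 0 ≤ t → |e t - c t| ≤ Me + Mc := fun t ht =>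
    (abs_sub _ _).trans (add_le_add (hMe t ht) (hMc t ht))
  obtain ⟨K, α, hK, hα, hPhi⟩ := exists_Phi_le_of_bohlUpper_neg hD_bdd hB
  refine ⟨K, α, hK, hα, fun t ht => ?_⟩
  rw [one_div, levins_inv_eq hc_cont he_cont hp hp0.1 ht, add_sub_cancel_right,
    abs_of_pos (mul_pos (Phi_pos _ _) (inv_pos.2 hp0.1))]
  calc Phi _ t 0 * (p 0)⁻¹ ≤ K * Real.exp (-α * (t - 0)) * (p 0)⁻¹ :=
        mul_le_mul_of_nonneg_right (hPhi 0 t le_rfl ht) (inv_nonneg.2 hp0.1.le)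
    _ = K / p 0 * Real.exp (-α * t) := by rw [sub_zero]; ring

/-- Persistence scenario: if `β⁺(e - c) < 0` then `1 / p t` equals
`∫_0^t Φ(t,s) c(s) ds` up to an exponentially decaying error. -/
theorem levins_persistence_asymptotic_formula (c e : ℝ → ℝ)
    (hc_cont : ContinuousOn c (Set.Ici 0)) (he_cont : ContinuousOn e (Set.Ici 0))
    (hc_bdd : ∃ M, ∀ t, 0 ≤ t → |c t| ≤ M) (he_bdd : ∃ M, ∀ t, 0 ≤ t → |e t| ≤ M)
    (hc_pos : ∀ t, 0 ≤ t → 0 < c t) (he_nonneg : ∀ t, 0 ≤ t → 0 ≤ e t)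
    (D : ℝ → ℝ) (hD : ∀ t, D t = e t - c t)
    (p : ℝ → ℝ)
    (hp : ∀ t, 0 ≤ t → HasDerivAt p (c t * p t * (1 - p t) - e t * p t) t)
    (hp0 : p 0 ∈ Set.Ioc (0 : ℝ) 1)
    (hB : bohlUpper D < 0) :
    ∃ K α : ℝ, 1 ≤ K ∧ 0 < α ∧
      ∀ t, 0 ≤ t →
        |1 / p t - ∫ s in (0 : ℝ)..t, Phi D t s * c s| ≤ (K / p 0) * Real.exp (-α * t) :=
  levins_persistence_asymptotic_formula_general c e hc_cont he_cont hc_bdd he_bdd D hD p hp hp0 hB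
end

section
/- Let c, e : [0,∞) → ℝ be bounded continuous functions with c(t) > 0 and e(t) ≥ 0 for all t ≥ 0, set D(t) = e(t) − c(t), and let p : [0,∞) → ℝ be a differentiable solution of the time-varying Levins model p'(t) = c(t)·p(t)·(1 − p(t)) − e(t)·p(t) with p(0) ∈ (0,1]. If the lower Bohl exponent satisfies β⁻(D) > 0, then there exist constants L ≥ 1 and η > 0 such that p(t) ≤ L·p(0)·exp(−η·t) for all t ≥ 0; in particular the fraction of occupied patches is driven exponentially to zero. -/
/-!
Writing the Levins equation as `p' = -D p - c p²` and using `c ≥ 0`, the product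
`p t * exp (∫₀ᵗ D)` has nonpositive derivative, so `p t ≤ p 0 * exp (-∫₀ᵗ D)`.
A positive lower Bohl exponent gives `∫₀ᵗ D ≥ η t` once `t` is large, and continuity of
`D` bounds `∫₀ᵗ D` from below on the remaining compact interval, so `∫₀ᵗ D ≥ η t - C`.
-/

open Filter Set

open Real

-- If `u` is unbounded below, the set defining the liminf is empty, and `sSup ∅ = 0` in `ℝ`.
theorem Filter.isBoundedUnder_ge_of_liminf_ne_zero {α : Type*} {f : Filter α} {u : α → ℝ}
    (h : liminf u f ≠ 0) : IsBoundedUnder (· ≥ ·) f u := by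
  by_contra hu
  have hempty : {a | ∀ᶠ x in f, a ≤ u x} = ∅ :=
    Set.eq_empty_of_forall_notMem fun a ha => hu ⟨a, eventually_map.2 ha⟩
  exact h (by rw [liminf_eq, hempty, Real.sSup_empty])

theorem exists_mul_le_integral_of_bohlLower_pos {D : ℝ → ℝ} (hB : 0 < bohlLower D) :
    ∃ η > 0, ∃ T > 0, ∀ s t, 0 ≤ s → s + T ≤ t → η * (t - s) ≤ ∫ τ in s..t, D τ := by
  have hev : ∀ᶠ q in bohlFilter, bohlLower D / 2 < bohlAvg D q :=
    eventually_lt_of_lt_liminf (by rw [← bohlLower]; linarith)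
      (isBoundedUnder_ge_of_liminf_ne_zero hB.ne')
  rw [bohlFilter, eventually_inf_principal, eventually_comap, eventually_atTop] at hev
  obtain ⟨T, hT⟩ := hev
  refine ⟨bohlLower D / 2, by linarith, max T 1, by positivity, fun s t hs hst => ?_⟩
  have hlen : 0 < t - s := by linarith [le_max_right T 1]
  have havg := hT (t - s) (by linarith [le_max_left T 1]) (s, t) rfl ⟨hs, by linarith⟩
  rw [bohlAvg, inv_mul_eq_div, lt_div_iff₀ hlen] at havg
  exact havg.le

section Primitive

variable {f : ℝ → ℝ} {a : ℝ}

theorem ContinuousOn.hasDerivAt_integral_of_lt (hf : ContinuousOn f (Ici a)) {t : ℝ}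
    (ht : a < t) : HasDerivAt (fun u => ∫ τ in a..u, f τ) (f t) t :=
  intervalIntegral.integral_hasDerivAt_right
    ((hf.mono (uIcc_of_le ht.le ▸ Icc_subset_Ici_self)).intervalIntegrable)
    ((hf.mono Ioi_subset_Ici_self).stronglyMeasurableAtFilter isOpen_Ioi t ht)
    (hf.continuousAt (Ici_mem_nhds ht))

theorem ContinuousOn.continuousOn_integral_Ici (hf : ContinuousOn f (Ici a)) :
    ContinuousOn (fun t => ∫ τ in a..t, f τ) (Ici a) := by
  intro t ht
  have hat : a ≤ t + 1 := by linarith [mem_Ici.1 ht]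
  have hIcc : ContinuousOn (fun t => ∫ τ in a..t, f τ) (Icc a (t + 1)) := by
    have := intervalIntegral.continuousOn_primitive_interval'
      ((hf.mono Icc_subset_Ici_self).intervalIntegrable_of_Icc (μ := MeasureTheory.volume) hat)
      left_mem_uIcc
    rwa [uIcc_of_le hat] at this
  refine (hIcc t ⟨ht, (lt_add_one t).le⟩).mono_of_mem_nhdsWithin ?_
  rw [← Ici_inter_Iic]
  exact inter_mem_nhdsWithin _ (Iic_mem_nhds (lt_add_one t))

end Primitive

theorem exists_sub_le_integral_of_bohlLower_pos {D : ℝ → ℝ} (hD : ContinuousOn D (Ici 0))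
    (hB : 0 < bohlLower D) :
    ∃ η > 0, ∃ C ≥ 0, ∀ t, 0 ≤ t → η * t - C ≤ ∫ τ in 0..t, D τ := by
  obtain ⟨η, hη, T, hT, hmean⟩ := exists_mul_le_integral_of_bohlLower_pos hB
  obtain ⟨t₀, ht₀, hmin⟩ := isCompact_Icc.exists_isMinOn (nonempty_Icc.2 hT.le)
    (hD.continuousOn_integral_Ici.mono Icc_subset_Ici_self)
  have hm : ∫ τ in (0 : ℝ)..t₀, D τ ≤ 0 := by
    simpa using hmin ⟨le_rfl, hT.le⟩
  refine ⟨η, hη, η * T - ∫ τ in 0..t₀, D τ, by nlinarith, fun t ht => ?_⟩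
  rcases le_total T t with hTt | htT
  · have := hmean 0 t le_rfl (by linarith)
    rw [sub_zero] at this
    nlinarith
  · have : ∫ τ in (0 : ℝ)..t₀, D τ ≤ ∫ τ in (0 : ℝ)..t, D τ := hmin ⟨ht, htT⟩
    nlinarith

theorem le_mul_exp_neg_integral_of_hasDerivAt {D p p' : ℝ → ℝ} (hD : ContinuousOn D (Ici 0))
    (hp : ∀ t, 0 ≤ t → HasDerivAt p (p' t) t) (hp'_le : ∀ t, 0 ≤ t → p' t ≤ -D t * p t)
    {t : ℝ} (ht : 0 ≤ t) : p t ≤ p 0 * exp (-∫ τ in 0..t, D τ) := by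
  have hderiv : ∀ t, 0 < t → HasDerivAt (fun t => p t * exp (∫ τ in 0..t, D τ))
      ((p' t + D t * p t) * exp (∫ τ in 0..t, D τ)) t := fun t ht =>
    ((hp t ht.le).mul (hD.hasDerivAt_integral_of_lt ht).exp).congr_deriv (by ring)
  have hanti : AntitoneOn (fun t => p t * exp (∫ τ in 0..t, D τ)) (Ici 0) := by
    refine antitoneOn_of_hasDerivWithinAt_nonpos (convex_Ici 0)
      ((HasDerivAt.continuousOn fun t ht => hp t ht).mul hD.continuousOn_integral_Ici.rexp)
      (fun t ht => (hderiv t (by simpa using ht)).hasDerivWithinAt) (fun t ht => ?_)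
    rw [interior_Ici] at ht
    exact mul_nonpos_of_nonpos_of_nonneg (by linarith [hp'_le t ht.le]) (exp_pos _).le
  have := hanti self_mem_Ici ht (mem_Ici.2 ht)
  simp only [intervalIntegral.integral_same, exp_zero, mul_one] at this
  rw [exp_neg, ← div_eq_mul_inv, le_div_iff₀ (exp_pos _)]
  exact this

theorem levins_exponential_extinction_general (c e : ℝ → ℝ)
    (hc_cont : ContinuousOn c (Set.Ici 0)) (he_cont : ContinuousOn e (Set.Ici 0))
    (hc_pos : ∀ t, 0 ≤ t → 0 < c t)
    (D : ℝ → ℝ) (hD : ∀ t, D t = e t - c t)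
    (p : ℝ → ℝ)
    (hp : ∀ t, 0 ≤ t → HasDerivAt p (c t * p t * (1 - p t) - e t * p t) t)
    (hp0 : p 0 ∈ Set.Ioc (0 : ℝ) 1)
    (hB : 0 < bohlLower D) :
    ∃ L η : ℝ, 1 ≤ L ∧ 0 < η ∧ ∀ t, 0 ≤ t → p t ≤ L * p 0 * Real.exp (-η * t) := by
  have hD_cont : ContinuousOn D (Ici 0) := by
    rw [show D = fun t => e t - c t from funext hD]
    exact he_cont.sub hc_cont
  obtain ⟨η, hη, C, hC, hgrowth⟩ := exists_sub_le_integral_of_bohlLower_pos hD_cont hB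
  have hsub : ∀ t, 0 ≤ t → c t * p t * (1 - p t) - e t * p t ≤ -D t * p t := fun t ht => by
    rw [hD]
    nlinarith [mul_nonneg (hc_pos t ht).le (sq_nonneg (p t))]
  refine ⟨exp C, η, one_le_exp hC, hη, fun t ht => ?_⟩
  calc p t ≤ p 0 * exp (-∫ τ in 0..t, D τ) :=
        le_mul_exp_neg_integral_of_hasDerivAt hD_cont hp hsub ht
    _ ≤ p 0 * exp (C - η * t) := by
      gcongr
      · exact hp0.1.le
      · linarith [hgrowth t ht]
    _ = exp C * p 0 * exp (-η * t) := by rw [sub_eq_add_neg, exp_add, neg_mul]; ring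

/-- Extinction scenario: if `β⁻(e - c) > 0` then the fraction of occupied patches
is driven exponentially to zero. -/
theorem levins_exponential_extinction (c e : ℝ → ℝ)
    (hc_cont : ContinuousOn c (Set.Ici 0)) (he_cont : ContinuousOn e (Set.Ici 0))
    (hc_bdd : ∃ M, ∀ t, 0 ≤ t → |c t| ≤ M) (he_bdd : ∃ M, ∀ t, 0 ≤ t → |e t| ≤ M)
    (hc_pos : ∀ t, 0 ≤ t → 0 < c t) (he_nonneg : ∀ t, 0 ≤ t → 0 ≤ e t)
    (D : ℝ → ℝ) (hD : ∀ t, D t = e t - c t)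
    (p : ℝ → ℝ)
    (hp : ∀ t, 0 ≤ t → HasDerivAt p (c t * p t * (1 - p t) - e t * p t) t)
    (hp0 : p 0 ∈ Set.Ioc (0 : ℝ) 1)
    (hB : 0 < bohlLower D) :
    ∃ L η : ℝ, 1 ≤ L ∧ 0 < η ∧ ∀ t, 0 ≤ t → p t ≤ L * p 0 * Real.exp (-η * t) :=
  levins_exponential_extinction_general c e hc_cont he_cont hc_pos D hD p hp hp0 hB
end

section
/- Let D : [0,∞) → ℝ be a bounded continuous function. For a real number λ, the following are equivalent: (i) λ > β⁺(D), where β⁺(D) is the upper Bohl exponent of D; (ii) the shifted equation x' = (D(t) − λ)·x admits an exponential dichotomy of stable type on [0,∞), i.e., there exist constants K ≥ 1 and α > 0 such that exp(∫_s^t (D(τ) − λ) dτ) ≤ K·exp(−α·(t − s)) for all t ≥ s ≥ 0. -/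
/-!
Both sides say that `∫ₛᵗ D ≤ c (t - s) + C` for all `0 ≤ s ≤ t`, for some rate `c < λ` and
constant `C`. For the dichotomy take `c = λ - α` and `C = log K`. If the Bohl averages are
eventually below `c`, the bound holds on long intervals with `C = 0`, and boundedness of `D`
covers the short ones; conversely, such a bound forces the averages over intervals of length
at least `C / ε` to be at most `c + ε`.
-/

open Filter Set

open MeasureTheory

-- Equivalently, `Phi D t s ≤ exp C * exp (c * (t - s))` for `0 ≤ s ≤ t`.
def IntegralGrowthLE (D : ℝ → ℝ) (c : ℝ) : Prop :=
  ∃ C, ∀ s t, 0 ≤ s → s ≤ t → ∫ τ in s..t, D τ ≤ c * (t - s) + C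

lemma eventually_bohlFilter_iff {P : ℝ × ℝ → Prop} :
    (∀ᶠ q in bohlFilter, P q) ↔ ∃ T, ∀ s t, 0 ≤ s → s < t → T ≤ t - s → P (s, t) := by
  rw [bohlFilter, eventually_inf_principal, eventually_comap, eventually_atTop]
  constructor
  · rintro ⟨T, hT⟩
    exact ⟨T, fun s t h0 hst hT' => hT _ hT' (s, t) rfl ⟨h0, hst⟩⟩
  · rintro ⟨T, hT⟩
    exact ⟨T, fun d hd q hq hq' => hT q.1 q.2 hq'.1 hq'.2 (hq ▸ hd)⟩

instance : bohlFilter.NeBot := by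
  refine ⟨fun h => ?_⟩
  obtain ⟨T, hT⟩ := eventually_bohlFilter_iff.mp (empty_mem_iff_bot.mpr h)
  exact hT 0 (max T 1) le_rfl (by positivity) (by simp)

lemma bohlAvg_le_iff {D : ℝ → ℝ} {s t c : ℝ} (hst : s < t) :
    bohlAvg D (s, t) ≤ c ↔ ∫ τ in s..t, D τ ≤ c * (t - s) := by
  rw [bohlAvg, inv_mul_le_iff₀ (sub_pos.mpr hst), mul_comm]

lemma abs_integral_le_of_abs_le {D : ℝ → ℝ} {M s t : ℝ} (hM : ∀ τ, 0 ≤ τ → |D τ| ≤ M)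
    (hs : 0 ≤ s) (hst : s ≤ t) : |∫ τ in s..t, D τ| ≤ M * (t - s) := by
  have h := intervalIntegral.norm_integral_le_of_norm_le_const (f := D) (C := M) fun τ hτ =>
    hM τ (hs.trans (uIoc_of_le hst ▸ hτ).1.le)
  rwa [Real.norm_eq_abs, abs_of_nonneg (sub_nonneg.mpr hst)] at h

lemma eventually_abs_bohlAvg_le {D : ℝ → ℝ} {M : ℝ} (hM : ∀ τ, 0 ≤ τ → |D τ| ≤ M) :
    ∀ᶠ q in bohlFilter, |bohlAvg D q| ≤ M := by
  refine eventually_bohlFilter_iff.mpr ⟨0, fun s t hs hst _ => ?_⟩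
  have hts : 0 < t - s := sub_pos.mpr hst
  rw [bohlAvg, abs_mul, abs_inv, abs_of_pos hts, inv_mul_le_iff₀ hts, mul_comm]
  exact abs_integral_le_of_abs_le hM hs hst.le

lemma integralGrowthLE_of_eventually_bohlAvg_le {D : ℝ → ℝ} {M c : ℝ}
    (hM : ∀ τ, 0 ≤ τ → |D τ| ≤ M) (h : ∀ᶠ q in bohlFilter, bohlAvg D q ≤ c) :
    IntegralGrowthLE D c := by
  obtain ⟨T, hT⟩ := eventually_bohlFilter_iff.mp h
  -- Intervals shorter than `max T 1` contribute at most `(M - c) (t - s)` beyond `c (t - s)`.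
  refine ⟨|M - c| * max T 1, fun s t hs hst => ?_⟩
  have hC : 0 ≤ |M - c| * max T 1 := by positivity
  rcases le_or_gt (max T 1) (t - s) with hlong | hshort
  · have hst' : s < t := by linarith [le_max_right T 1]
    linarith [(bohlAvg_le_iff hst').mp (hT s t hs hst' ((le_max_left T 1).trans hlong))]
  · have hI := (abs_le.mp (abs_integral_le_of_abs_le hM hs hst)).2
    have : (M - c) * (t - s) ≤ |M - c| * max T 1 :=
      (mul_le_mul_of_nonneg_right (le_abs_self _) (sub_nonneg.mpr hst)).trans
        (mul_le_mul_of_nonneg_left hshort.le (abs_nonneg _))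
    linarith

lemma IntegralGrowthLE.eventually_bohlAvg_le {D : ℝ → ℝ} {c ε : ℝ} (h : IntegralGrowthLE D c)
    (hε : 0 < ε) : ∀ᶠ q in bohlFilter, bohlAvg D q ≤ c + ε := by
  obtain ⟨C, hC⟩ := h
  refine eventually_bohlFilter_iff.mpr ⟨C / ε, fun s t hs hst hT => ?_⟩
  rw [bohlAvg_le_iff hst]
  linarith [hC s t hs hst.le, (div_le_iff₀ hε).mp hT]

lemma bohlUpper_lt_iff {D : ℝ → ℝ} {M : ℝ} (hM : ∀ τ, 0 ≤ τ → |D τ| ≤ M) {lam : ℝ} :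
    bohlUpper D < lam ↔ ∃ c < lam, IntegralGrowthLE D c := by
  have hbdd := eventually_abs_bohlAvg_le hM
  constructor
  · intro hlt
    obtain ⟨c, hupper, hc⟩ := exists_between hlt
    have hev := eventually_lt_of_limsup_lt hupper
      (isBoundedUnder_of_eventually_le (hbdd.mono fun _ h => (abs_le.mp h).2))
    exact ⟨c, hc, integralGrowthLE_of_eventually_bohlAvg_le hM (hev.mono fun _ h => h.le)⟩
  · rintro ⟨c, hc, hgrowth⟩
    have hcobdd : IsCoboundedUnder (· ≤ ·) bohlFilter (bohlAvg D) :=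
      (isBoundedUnder_of_eventually_ge (hbdd.mono fun _ h => (abs_le.mp h).1)).isCoboundedUnder_le
    have hlimsup := limsup_le_of_le hcobdd
      (hgrowth.eventually_bohlAvg_le (half_pos (sub_pos.mpr hc)))
    exact hlimsup.trans_lt (by linarith)

lemma exp_integral_sub_le_iff {D : ℝ → ℝ} (hD : LocallyIntegrableOn D (Ici 0))
    {s t : ℝ} (hs : 0 ≤ s) (hst : s ≤ t) (lam α C : ℝ) :
    Real.exp (∫ τ in s..t, (D τ - lam)) ≤ Real.exp C * Real.exp (-α * (t - s)) ↔
      ∫ τ in s..t, D τ ≤ (lam - α) * (t - s) + C := by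
  have hint : IntervalIntegrable D volume s t :=
    (intervalIntegrable_iff_integrableOn_Icc_of_le hst).mpr
      (hD.integrableOn_compact_subset (Icc_subset_Ici_iff hst |>.mpr hs) isCompact_Icc)
  rw [intervalIntegral.integral_sub hint intervalIntegrable_const, intervalIntegral.integral_const,
    smul_eq_mul, ← Real.exp_add, Real.exp_le_exp]
  constructor <;> intro h <;> linarith

lemma exists_stable_dichotomy_iff {D : ℝ → ℝ} (hD : LocallyIntegrableOn D (Ici 0)) (lam : ℝ) :
    (∃ K α : ℝ, 1 ≤ K ∧ 0 < α ∧ ∀ s t, 0 ≤ s → s ≤ t →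
        Real.exp (∫ τ in s..t, (D τ - lam)) ≤ K * Real.exp (-α * (t - s))) ↔
      ∃ c < lam, IntegralGrowthLE D c := by
  constructor
  · rintro ⟨K, α, hK, hα, h⟩
    refine ⟨lam - α, by linarith, Real.log K, fun s t hs hst => ?_⟩
    have := h s t hs hst
    rwa [← Real.exp_log (zero_lt_one.trans_le hK), exp_integral_sub_le_iff hD hs hst] at this
  · rintro ⟨c, hc, C, hC⟩
    refine ⟨Real.exp (max C 0), lam - c, Real.one_le_exp (le_max_right C 0), sub_pos.mpr hc,
      fun s t hs hst => ?_⟩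
    rw [exp_integral_sub_le_iff hD hs hst, sub_sub_cancel]
    linarith [hC s t hs hst, le_max_left C 0]

/-- Characterization of the spectral gap `(β⁺(D), +∞)`: `λ > β⁺(D)` iff the shifted
equation `x' = (D t - λ) x` admits an exponential dichotomy of stable type on `[0,∞)`. -/
theorem spectral_gap_stable_characterization (D : ℝ → ℝ)
    (hD_cont : ContinuousOn D (Set.Ici 0)) (hD_bdd : ∃ M, ∀ t, 0 ≤ t → |D t| ≤ M)
    (lam : ℝ) :
    bohlUpper D < lam ↔
      ∃ K α : ℝ, 1 ≤ K ∧ 0 < α ∧ ∀ s t, 0 ≤ s → s ≤ t →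
        Real.exp (∫ τ in s..t, (D τ - lam)) ≤ K * Real.exp (-α * (t - s)) := by
  obtain ⟨M, hM⟩ := hD_bdd
  rw [bohlUpper_lt_iff hM, exists_stable_dichotomy_iff (hD_cont.locallyIntegrableOn measurableSet_Ici)]
end

section
/- Let c, e : [0,∞) → ℝ be bounded continuous functions with e(t) ≥ 0 for all t ≥ 0 and inf_{t≥0} c(t) ≥ c⋆ for some constant c⋆ > 0, set D(t) = e(t) − c(t), and suppose β⁻(D) ≤ 0 ≤ β⁺(D). Then every differentiable solution p : [0,∞) → ℝ of the time-varying Levins model p'(t) = c(t)·p(t)·(1 − p(t)) − e(t)·p(t) with p(0) ∈ (0,1) satisfies liminf_{t→+∞} p(t) = 0. -/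
open Filter Set

private lemma ftc_cont {g : ℝ → ℝ} (hg : Continuous g) (t : ℝ) :
    HasDerivAt (fun u => ∫ τ in (0:ℝ)..u, g τ) (g t) t :=
  intervalIntegral.integral_hasDerivAt_right (hg.intervalIntegrable _ _)
    (hg.stronglyMeasurableAtFilter _ _) hg.continuousAt

private lemma eqOn_const_of_deriv (f f' : ℝ → ℝ)
    (h : ∀ t, 0 ≤ t → HasDerivAt f (f' t) t)
    (h0 : ∀ t, 0 ≤ t → f' t = 0) : ∀ t, 0 ≤ t → f t = f 0 := by
  intro t ht
  refine constant_of_has_deriv_right_zero (f := f) (a := 0) (b := t)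
    (fun x hx => ((h x hx.1).continuousAt).continuousWithinAt)
    (fun x hx => by
      have hd := (h x hx.1).hasDerivWithinAt (s := Set.Ici x)
      rwa [h0 x hx.1] at hd) t (Set.right_mem_Icc.2 ht)

/-- If `β⁻(e - c) ≤ 0 ≤ β⁺(e - c)`, then every solution of the time-varying Levins
model with `p 0 ∈ (0, 1)` satisfies `liminf_{t→∞} p t = 0`. -/
theorem levins_no_dichotomy_liminf_zero (c e : ℝ → ℝ) (cstar : ℝ) (hcstar : 0 < cstar)
    (hc_cont : ContinuousOn c (Set.Ici 0)) (he_cont : ContinuousOn e (Set.Ici 0))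
    (hc_bdd : ∃ M, ∀ t, 0 ≤ t → |c t| ≤ M) (he_bdd : ∃ M, ∀ t, 0 ≤ t → |e t| ≤ M)
    (hc_lb : ∀ t, 0 ≤ t → cstar ≤ c t) (he_nonneg : ∀ t, 0 ≤ t → 0 ≤ e t)
    (D : ℝ → ℝ) (hD : ∀ t, D t = e t - c t)
    (h1 : bohlLower D ≤ 0) (h2 : 0 ≤ bohlUpper D)
    (p : ℝ → ℝ)
    (hp : ∀ t, 0 ≤ t → HasDerivAt p (c t * p t * (1 - p t) - e t * p t) t)
    (hp0 : p 0 ∈ Set.Ioo (0 : ℝ) 1) :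
    Filter.liminf p Filter.atTop = 0 := by
  obtain ⟨hp0pos, hp0lt⟩ := hp0
  obtain ⟨Mc, hMc⟩ := hc_bdd
  obtain ⟨Me, hMe⟩ := he_bdd
  -- clamped versions of the coefficient functions and of `p`
  have hκ : Continuous (fun t : ℝ => max t 0) := continuous_id.max continuous_const
  have hκ0 : ∀ t : ℝ, (0:ℝ) ≤ max t 0 := fun t => le_max_right _ _
  have hκeq : ∀ t : ℝ, 0 ≤ t → max t 0 = t := fun t ht => max_eq_left ht
  have hpc : ContinuousOn p (Set.Ici 0) := fun x hx =>
    ((hp x hx).continuousAt).continuousWithinAt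
  set cc : ℝ → ℝ := fun t => c (max t 0) with hcc_def
  set ee : ℝ → ℝ := fun t => e (max t 0) with hee_def
  set pp : ℝ → ℝ := fun t => p (max t 0) with hpp_def
  have hcc : Continuous cc := hc_cont.comp_continuous hκ hκ0
  have hec : Continuous ee := he_cont.comp_continuous hκ hκ0
  have hppc : Continuous pp := hpc.comp_continuous hκ hκ0
  set F : ℝ → ℝ := fun t => cc t * (1 - pp t) - ee t with hF_def
  have hFc : Continuous F := (hcc.mul (continuous_const.sub hppc)).sub hec
  have hFt : ∀ t, 0 ≤ t → F t = c t * (1 - p t) - e t := by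
    intro t ht; simp only [hF_def, hcc_def, hee_def, hpp_def, hκeq t ht]
  set I : ℝ → ℝ := fun t => ∫ τ in (0:ℝ)..t, F τ with hI_def
  have hI : ∀ t, HasDerivAt I (F t) t := ftc_cont hFc
  have hI0 : I 0 = 0 := intervalIntegral.integral_same
  -- positivity of p on [0,∞)
  have hgz := eqOn_const_of_deriv (fun t => p t * Real.exp (-(I t)))
      (fun t => (c t * p t * (1 - p t) - e t * p t) * Real.exp (-(I t))
        + p t * (Real.exp (-(I t)) * -(F t)))
      (fun t ht => (hp t ht).mul ((hI t).neg.exp))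
      (fun t ht => by simp only [hFt t ht]; ring)
  have hppos : ∀ t, 0 ≤ t → 0 < p t := by
    intro t ht
    have h := hgz t ht
    simp only [hI0, neg_zero, Real.exp_zero, mul_one] at h
    nlinarith [Real.exp_pos (-(I t))]
  -- upper bound: p < 1 on [0,∞)
  set A : ℝ → ℝ := fun t => -(cc t * pp t) with hA_def
  have hAc : Continuous A := (hcc.mul hppc).neg
  set J : ℝ → ℝ := fun t => ∫ τ in (0:ℝ)..t, A τ with hJ_def
  have hJ : ∀ t, HasDerivAt J (A t) t := ftc_cont hAc
  have hJdiff : Differentiable ℝ J := fun t => (hJ t).differentiableAt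
  have hJc : Continuous J := hJdiff.continuous
  set bb : ℝ → ℝ := fun t => ee t * pp t with hbb_def
  set bK : ℝ → ℝ := fun t => bb t * Real.exp (-(J t)) with hbK_def
  have hbKc : Continuous bK := (hec.mul hppc).mul (Real.continuous_exp.comp hJc.neg)
  set K : ℝ → ℝ := fun t => ∫ σ in (0:ℝ)..t, bK σ with hK_def
  have hK : ∀ t, HasDerivAt K (bK t) t := ftc_cont hbKc
  have hhz := eqOn_const_of_deriv (fun t => (1 - p t) * Real.exp (-(J t)) - K t)
      (fun t => ((0 - (c t * p t * (1 - p t) - e t * p t)) * Real.exp (-(J t))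
        + (1 - p t) * (Real.exp (-(J t)) * -(A t))) - bK t)
      (fun t ht =>
        (((hasDerivAt_const t (1:ℝ)).sub (hp t ht)).mul ((hJ t).neg.exp)).sub (hK t))
      (fun t ht => by
        simp only [hbK_def, hbb_def, hA_def, hcc_def, hee_def, hpp_def, hκeq t ht]
        ring)
  have hplt : ∀ t, 0 ≤ t → p t < 1 := by
    intro t ht
    have h := hhz t ht
    have hJ0 : J 0 = 0 := intervalIntegral.integral_same
    have hK0 : K 0 = 0 := intervalIntegral.integral_same
    simp only [hJ0, hK0, neg_zero, Real.exp_zero, mul_one, sub_zero] at h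
    have hKnn : 0 ≤ K t := by
      apply intervalIntegral.integral_nonneg ht
      intro u _
      have h1 : 0 < pp u := hppos _ (hκ0 u)
      have h2 : 0 ≤ ee u := he_nonneg _ (hκ0 u)
      exact mul_nonneg (mul_nonneg h2 h1.le) (Real.exp_pos _).le
    nlinarith [Real.exp_pos (-(J t))]
  -- the logarithmic identity
  have hLz := eqOn_const_of_deriv (fun t => Real.log (p t) - I t)
      (fun t => (c t * p t * (1 - p t) - e t * p t) / p t - F t)
      (fun t ht => ((hp t ht).log (ne_of_gt (hppos t ht))).sub (hI t))
      (fun t ht => by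
        have hne : p t ≠ 0 := ne_of_gt (hppos t ht)
        simp only [hFt t ht]
        field_simp
        ring)
  have hlog : ∀ s t : ℝ, 0 ≤ s → s ≤ t →
      Real.log (p t) - Real.log (p s) = ∫ τ in s..t, F τ := by
    intro s t hs hst
    have h1 : Real.log (p t) - I t = Real.log (p 0) - I 0 := hLz t (hs.trans hst)
    have h2 : Real.log (p s) - I s = Real.log (p 0) - I 0 := hLz s hs
    have h3 : I t - I s = ∫ τ in s..t, F τ :=
      intervalIntegral.integral_interval_sub_left (hFc.intervalIntegrable _ _)
        (hFc.intervalIntegrable _ _)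
    linarith
  -- bound for |D| on [0,∞)
  set MD : ℝ := Mc + Me with hMD_def
  have hMD0 : 0 ≤ MD := by
    have h1 := hMc 0 le_rfl; have h2 := hMe 0 le_rfl
    have h3 := abs_nonneg (c 0); have h4 := abs_nonneg (e 0); linarith
  have hDb : ∀ τ, 0 ≤ τ → |D τ| ≤ MD := by
    intro τ hτ
    rw [hD]
    have h1 := abs_sub (e τ) (c τ)
    have h2 := hMc τ hτ; have h3 := hMe τ hτ
    linarith
  have hDcont : ContinuousOn D (Set.Ici 0) := by
    have hfe : D = fun t => e t - c t := funext hD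
    rw [hfe]; exact he_cont.sub hc_cont
  have hDint : ∀ s t : ℝ, 0 ≤ s → 0 ≤ t →
      IntervalIntegrable D MeasureTheory.volume s t := by
    intro s t hs ht
    apply ContinuousOn.intervalIntegrable
    exact hDcont.mono fun x hx => le_trans (le_min hs ht) hx.1
  -- eventual bounds at atTop and the lower bound for the liminf
  have hub_ev : ∀ᶠ t in atTop, p t ≤ 1 :=
    (eventually_ge_atTop (0:ℝ)).mono fun t ht => (hplt t ht).le
  have hlb_ev : ∀ᶠ t in atTop, (0:ℝ) ≤ p t :=
    (eventually_ge_atTop (0:ℝ)).mono fun t ht => (hppos t ht).le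
  have hge : (0:ℝ) ≤ liminf p atTop :=
    le_liminf_of_le (isCoboundedUnder_ge_of_eventually_le _ hub_ev) hlb_ev
  refine le_antisymm ?_ hge
  by_contra hlt
  push_neg at hlt
  set L := liminf p atTop with hL_def
  set δ : ℝ := min (L / 2) (1 / 2) with hδ_def
  have hδpos : 0 < δ := lt_min (by linarith) (by norm_num)
  have hδlt1 : δ < 1 := lt_of_le_of_lt (min_le_right _ _) (by norm_num)
  have hδltL : δ < L := lt_of_le_of_lt (min_le_left _ _) (by linarith)
  have hbddunder : Filter.IsBoundedUnder (· ≥ ·) atTop p := ⟨0, by simpa using hlb_ev⟩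
  have hevδ : ∀ᶠ x in atTop, δ < p x := eventually_lt_of_lt_liminf hδltL hbddunder
  obtain ⟨T0, hT0⟩ := eventually_atTop.mp hevδ
  set T : ℝ := max T0 0 with hT_def
  have hTnn : (0:ℝ) ≤ T := le_max_right _ _
  have hT : ∀ x, T ≤ x → δ < p x := fun x hx => hT0 x (le_trans (le_max_left _ _) hx)
  -- key estimate beyond time T
  have key1 : ∀ s t : ℝ, T ≤ s → s < t →
      (∫ τ in s..t, D τ) ≤ -Real.log δ - cstar * δ * (t - s) := by
    intro s t hTs hst
    have hs0 : (0:ℝ) ≤ s := le_trans hTnn hTs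
    have ht0 : (0:ℝ) ≤ t := le_trans hs0 hst.le
    have hDeq : (∫ τ in s..t, D τ) = ∫ τ in s..t, (ee τ - cc τ) := by
      apply intervalIntegral.integral_congr
      intro x hx
      have hx0 : (0:ℝ) ≤ x := le_trans (le_min hs0 ht0) hx.1
      simp only [hcc_def, hee_def, hκeq x hx0, hD x]
    have hint1 : IntervalIntegrable (fun τ => ee τ - cc τ) MeasureTheory.volume s t :=
      (hec.sub hcc).intervalIntegrable _ _
    have hint2 : IntervalIntegrable (fun τ => cc τ * pp τ) MeasureTheory.volume s t :=
      (hcc.mul hppc).intervalIntegrable _ _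
    have hint1' : IntervalIntegrable (fun τ => -(ee τ - cc τ)) MeasureTheory.volume s t :=
      ((hec.sub hcc).neg).intervalIntegrable _ _
    have hFint : (∫ τ in s..t, F τ)
        = -(∫ τ in s..t, (ee τ - cc τ)) - ∫ τ in s..t, cc τ * pp τ := by
      have hcongr : (∫ τ in s..t, F τ)
          = ∫ τ in s..t, (-(ee τ - cc τ) - cc τ * pp τ) :=
        intervalIntegral.integral_congr (fun x _ => by simp only [hF_def]; ring)
      rw [hcongr, intervalIntegral.integral_sub hint1' hint2, intervalIntegral.integral_neg]
    have hcp : cstar * δ * (t - s) ≤ ∫ τ in s..t, cc τ * pp τ := by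
      have hmono := intervalIntegral.integral_mono_on hst.le
        ((continuous_const : Continuous fun _ : ℝ => cstar * δ).intervalIntegrable _ _)
        hint2 (fun x hx => by
          have hx0 : (0:ℝ) ≤ x := le_trans hs0 hx.1
          have hxT : T ≤ x := le_trans hTs hx.1
          have hb1 : cstar ≤ cc x := by
            simp only [hcc_def, hκeq x hx0]; exact hc_lb x hx0
          have hb2 : δ ≤ pp x := by
            simp only [hpp_def, hκeq x hx0]; exact (hT x hxT).le
          nlinarith)
      rw [intervalIntegral.integral_const, smul_eq_mul] at hmono
      linarith
    have hlogeq := hlog s t hs0 hst.le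
    have hlpt : Real.log δ ≤ Real.log (p t) :=
      Real.log_le_log hδpos (hT t (le_trans hTs hst.le)).le
    have hlps : Real.log (p s) ≤ 0 :=
      Real.log_nonpos (hppos s hs0).le (hplt s hs0).le
    rw [hDeq]
    rw [hFint] at hlogeq
    linarith
  -- global key estimate
  set C : ℝ := (MD + cstar * δ) * T - Real.log δ with hC_def
  have hlogδneg : Real.log δ < 0 := Real.log_neg hδpos hδlt1
  have hcd : 0 < cstar * δ := mul_pos hcstar hδpos
  have hCpos : 0 < C := by
    have := mul_nonneg (add_nonneg hMD0 hcd.le) hTnn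
    simp only [hC_def]; linarith
  have key2 : ∀ s t : ℝ, 0 ≤ s → s < t →
      (∫ τ in s..t, D τ) ≤ C - cstar * δ * (t - s) := by
    intro s t hs hst
    have ht0 : (0:ℝ) ≤ t := le_trans hs hst.le
    rcases le_or_gt t T with hle | hgt
    · have hb := intervalIntegral.norm_integral_le_of_norm_le_const
        (C := MD) (f := D) (a := s) (b := t) (fun x hx => by
          have hx0 : (0:ℝ) ≤ x := le_of_lt (lt_of_le_of_lt (le_min hs ht0) hx.1)
          rw [Real.norm_eq_abs]; exact hDb x hx0)
      rw [Real.norm_eq_abs, abs_of_pos (by linarith : (0:ℝ) < t - s)] at hb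
      have h2 : (∫ τ in s..t, D τ) ≤ MD * (t - s) := (abs_le.1 hb).2
      have e1 : MD * (t - s) ≤ MD * T := mul_le_mul_of_nonneg_left (by linarith) hMD0
      have e2 : cstar * δ * (t - s) ≤ cstar * δ * T :=
        mul_le_mul_of_nonneg_left (by linarith) hcd.le
      simp only [hC_def]
      have e3 : (MD + cstar * δ) * T = MD * T + cstar * δ * T := by ring
      linarith
    · set s' := max s T with hs'_def
      have hs'T : T ≤ s' := le_max_right _ _
      have hss' : s ≤ s' := le_max_left _ _
      have hs't : s' < t := max_lt hst hgt
      have hs'0 : (0:ℝ) ≤ s' := le_trans hTnn hs'T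
      have hsplit : (∫ τ in s..t, D τ) = (∫ τ in s..s', D τ) + ∫ τ in s'..t, D τ :=
        (intervalIntegral.integral_add_adjacent_intervals
          (hDint s s' hs hs'0) (hDint s' t hs'0 ht0)).symm
      have hk := key1 s' t hs'T hs't
      have hb := intervalIntegral.norm_integral_le_of_norm_le_const
        (C := MD) (f := D) (a := s) (b := s') (fun x hx => by
          have hx0 : (0:ℝ) ≤ x := le_of_lt (lt_of_le_of_lt (le_min hs hs'0) hx.1)
          rw [Real.norm_eq_abs]; exact hDb x hx0)
      rw [Real.norm_eq_abs, abs_of_nonneg (by linarith : (0:ℝ) ≤ s' - s)] at hb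
      have h2 : (∫ τ in s..s', D τ) ≤ MD * (s' - s) := (abs_le.1 hb).2
      have hs'sT : s' - s ≤ T := by
        have : s' ≤ s + T := max_le (by linarith) (by linarith)
        linarith
      have e1 : MD * (s' - s) ≤ MD * T := mul_le_mul_of_nonneg_left hs'sT hMD0
      have e2 : cstar * δ * (s' - s) ≤ cstar * δ * T :=
        mul_le_mul_of_nonneg_left hs'sT hcd.le
      have e3 : cstar * δ * (t - s) = cstar * δ * (t - s') + cstar * δ * (s' - s) := by ring
      have e4 : (MD + cstar * δ) * T = MD * T + cstar * δ * T := by ring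
      simp only [hC_def]
      linarith
  -- the Bohl filter is nontrivial
  have htend : Tendsto (fun x : ℝ => ((0:ℝ), x)) atTop bohlFilter := by
    unfold bohlFilter
    refine tendsto_inf.2 ⟨tendsto_comap_iff.2 ?_, tendsto_principal.2 ?_⟩
    · simp only [Function.comp_def, sub_zero]
      exact tendsto_id
    · filter_upwards [eventually_gt_atTop (0:ℝ)] with x hx
      exact ⟨le_rfl, hx⟩
  haveI hNB : bohlFilter.NeBot := htend.neBot
  have hmemR : ∀ R : ℝ, {q : ℝ × ℝ | R ≤ q.2 - q.1} ∈ bohlFilter := by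
    intro R
    unfold bohlFilter
    exact mem_inf_of_left (preimage_mem_comap (mem_atTop R))
  have hmemP : {q : ℝ × ℝ | 0 ≤ q.1 ∧ q.1 < q.2} ∈ bohlFilter := by
    unfold bohlFilter
    exact mem_inf_of_right (mem_principal_self _)
  -- the limsup bound
  have hev2 : ∀ᶠ q in bohlFilter, bohlAvg D q ≤ -(cstar * δ) / 2 := by
    filter_upwards [hmemR (max (2 * C / (cstar * δ)) 1), hmemP] with q hq1 hq2
    obtain ⟨hq0, hqlt⟩ := hq2
    have hd1 : (1:ℝ) ≤ q.2 - q.1 := le_trans (le_max_right _ _) hq1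
    have hd0 : (0:ℝ) < q.2 - q.1 := by linarith
    have hkey := key2 q.1 q.2 hq0 hqlt
    have hdiv : 2 * C / (cstar * δ) ≤ q.2 - q.1 := le_trans (le_max_left _ _) hq1
    have h2C : 2 * C ≤ (q.2 - q.1) * (cstar * δ) := by
      rw [div_le_iff₀ hcd] at hdiv; linarith
    unfold bohlAvg
    rw [inv_mul_le_iff₀ hd0]
    nlinarith
  have hcb : Filter.IsCoboundedUnder (· ≤ ·) bohlFilter (bohlAvg D) := by
    apply isCoboundedUnder_le_of_eventually_le bohlFilter (x := -MD)
    filter_upwards [hmemP] with q hq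
    obtain ⟨hq0, hqlt⟩ := hq
    have hd0 : (0:ℝ) < q.2 - q.1 := by linarith
    have hb := intervalIntegral.norm_integral_le_of_norm_le_const
      (C := MD) (f := D) (a := q.1) (b := q.2) (fun x hx => by
        have hx0 : (0:ℝ) ≤ x :=
          le_of_lt (lt_of_le_of_lt (le_min hq0 (le_trans hq0 hqlt.le)) hx.1)
        rw [Real.norm_eq_abs]; exact hDb x hx0)
    rw [Real.norm_eq_abs, abs_of_pos hd0] at hb
    have h2 : -(MD * (q.2 - q.1)) ≤ ∫ τ in q.1..q.2, D τ := (abs_le.1 hb).1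
    unfold bohlAvg
    rw [le_inv_mul_iff₀ hd0]
    nlinarith
  have hfin : bohlUpper D ≤ -(cstar * δ) / 2 := by
    unfold bohlUpper
    exact limsup_le_of_le hcb hev2
  linarith
end
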